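/- Let A be an N×N real symmetric positive definite matrix with smallest eigenvalue λ₁ and largest eigenvalue λ_N, and set κ(A) = λ_N/λ₁. Let b ∈ ℝ^N, x = A⁻¹b, x₀ ∈ ℝ^N with x₀ ≠ x, and r₀ = b − Ax₀. Then for every k, the minimum over z ∈ x₀ + K_k(A,r₀) of ‖x − z‖_A is at most 2·((√κ(A) − 1)/(√κ(A) + 1))^k · ‖x − x₀‖_A. -/

import Mathlib

open Matrix Polynomial

/-- The `A`-norm `‖v‖_A = (vᵀ A v)^{1/2}`. -/
noncomputable def Anorm {N : ℕ} (A : Matrix (Fin N) (Fin N) ℝ) (v : Fin N → ℝ) : ℝ :=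
  Real.sqrt (v ⬝ᵥ A *ᵥ v)

/-- The `k`-th Krylov subspace `K_k(A, r) = span {r, Ar, …, A^{k-1} r}`. -/
def krylov {N : ℕ} (A : Matrix (Fin N) (Fin N) ℝ) (r : Fin N → ℝ) (k : ℕ) :
    Submodule ℝ (Fin N → ℝ) :=
  Submodule.span ℝ {v | ∃ i < k, v = (A ^ i) *ᵥ r}

/-!
If `p` is a polynomial of degree at most `k` with `p 0 = 1`, then `1 - p = s X` with
`deg s < k`, so `z = x₀ + s(A) r₀` lies in `x₀ + K_k(A, r₀)` and, as `r₀ = A (x - x₀)`, its error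
is `x - z = p(A) (x - x₀)`. Through the functional calculus, `p(A) A p(A) ≤ (max_{σ(A)} |p|)² A`
in the Loewner order, so `‖p(A) e‖_A ≤ max_{σ(A)} |p| · ‖e‖_A`. For `p` we take the Chebyshev
polynomial `T_k` moved affinely from `[-1, 1]` to `[λ₁, λ_N]` and normalised at `0`. On the
spectrum `|p| ≤ 1 / T_k((κ + 1)/(κ - 1))`, and with `q = (√κ - 1)/(√κ + 1)` we have
`(κ + 1)/(κ - 1) = (q + q⁻¹)/2` and `T_k((q + q⁻¹)/2) = (q^k + q^{-k})/2 ≥ q^{-k}/2`.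
-/

section FunctionalCalculus

open scoped ComplexOrder

variable {𝕜 n : Type*} [RCLike 𝕜] [Fintype n] [DecidableEq n] {A : Matrix n n 𝕜}

lemma Matrix.PosDef.pos_of_mem_spectrum (hA : A.PosDef) {μ : ℝ} (hμ : μ ∈ spectrum ℝ A) :
    0 < μ := by
  obtain ⟨i, rfl⟩ := hA.1.spectrum_real_eq_range_eigenvalues ▸ hμ
  exact hA.eigenvalues_pos i

lemma isSelfAdjoint_aeval (hA : A.IsHermitian) (p : ℝ[X]) : IsSelfAdjoint (aeval A p) :=
  cfc_polynomial p A hA ▸ cfc_predicate _ A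

open scoped MatrixOrder in
lemma aeval_mul_mul_aeval_le (hA : A.PosSemidef) (p : ℝ[X]) {C : ℝ}
    (hp : ∀ μ ∈ spectrum ℝ A, |p.eval μ| ≤ C) :
    aeval A p * A * aeval A p ≤ C ^ 2 • A := by
  have hsa : IsSelfAdjoint A := hA.1
  calc aeval A p * A * aeval A p = cfc (fun x => p.eval x * x * p.eval x) A := by
        rw [cfc_mul .., cfc_mul .., cfc_id' ℝ A, cfc_polynomial p A]
    _ ≤ cfc (fun x => C ^ 2 * x) A := by
        refine cfc_mono fun μ hμ => ?_
        have hμ0 : 0 ≤ μ := spectrum_nonneg_of_nonneg hA.nonneg hμ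
        have hsq : p.eval μ ^ 2 ≤ C ^ 2 := sq_le_sq' (abs_le.mp (hp μ hμ)).1 (abs_le.mp (hp μ hμ)).2
        nlinarith
    _ = C ^ 2 • A := cfc_const_mul_id _ _

end FunctionalCalculus

section Krylov

variable {N : ℕ}

lemma Anorm_aeval_mulVec_le {A : Matrix (Fin N) (Fin N) ℝ} (hA : A.PosSemidef) (p : ℝ[X])
    {C : ℝ} (hC : 0 ≤ C) (hp : ∀ μ ∈ spectrum ℝ A, |p.eval μ| ≤ C) (w : Fin N → ℝ) :
    Anorm A (aeval A p *ᵥ w) ≤ C * Anorm A w := by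
  set B := aeval A p
  have hBt : Bᵀ = B := by
    rw [← conjTranspose_eq_transpose_of_trivial]
    exact (isSelfAdjoint_aeval hA.1 p).star_eq
  have hform : w ⬝ᵥ (B * A * B) *ᵥ w = (B *ᵥ w) ⬝ᵥ A *ᵥ (B *ᵥ w) := by
    rw [← mulVec_mulVec, ← mulVec_mulVec, dotProduct_mulVec, ← mulVec_transpose, hBt]
  have hquad := (le_iff.mp (aeval_mul_mul_aeval_le hA p hp)).dotProduct_mulVec_nonneg w
  rw [star_trivial, sub_mulVec, dotProduct_sub, hform, smul_mulVec, dotProduct_smul,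
    smul_eq_mul, sub_nonneg] at hquad
  calc Anorm A (B *ᵥ w) ≤ Real.sqrt (C ^ 2 * (w ⬝ᵥ A *ᵥ w)) := Real.sqrt_le_sqrt hquad
    _ = C * Anorm A w := by rw [Real.sqrt_mul (sq_nonneg C), Real.sqrt_sq hC, Anorm]

lemma aeval_mulVec_mem_krylov (A : Matrix (Fin N) (Fin N) ℝ) (r : Fin N → ℝ) {k : ℕ}
    {s : ℝ[X]} (hs : s ∈ degreeLT ℝ k) : aeval A s *ᵥ r ∈ krylov A r k := by
  classical
  rw [degreeLT_eq_span_X_pow] at hs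
  induction hs using Submodule.span_induction with
  | mem q hq =>
      obtain ⟨i, hi, rfl⟩ := Finset.mem_image.mp hq
      exact Submodule.subset_span ⟨i, Finset.mem_range.mp hi, by simp⟩
  | zero => simp
  | add q q' _ _ hq hq' => simpa [add_mulVec] using add_mem hq hq'
  | smul c q _ hq => simpa [smul_mulVec] using Submodule.smul_mem _ c hq

lemma exists_mem_krylov_sub_eq_aeval_mulVec (A : Matrix (Fin N) (Fin N) ℝ) (e : Fin N → ℝ)
    {k : ℕ} {p : ℝ[X]} (hp0 : p.eval 0 = 1) (hpk : p.natDegree ≤ k) :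
    ∃ v ∈ krylov A (A *ᵥ e) k, e - v = aeval A p *ᵥ e := by
  set s := (1 - p).divX
  have hs : s * X = 1 - p := by
    have h := divX_mul_X_add (1 - p)
    rwa [coeff_sub, coeff_one_zero, coeff_zero_eq_eval_zero, hp0, sub_self, map_zero,
      add_zero] at h
  have hsk : s ∈ degreeLT ℝ k := by
    refine mem_degreeLT.mpr ((degree_lt_iff_coeff_zero _ _).mpr fun m hm => ?_)
    rw [coeff_divX]
    refine coeff_eq_zero_of_natDegree_lt ((natDegree_sub_le _ _).trans_lt ?_)
    simp only [natDegree_one]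
    omega
  refine ⟨aeval A s *ᵥ (A *ᵥ e), aeval_mulVec_mem_krylov A _ hsk, ?_⟩
  have hA : aeval A s * A = aeval A (s * X) := by rw [map_mul, aeval_X]
  rw [mulVec_mulVec, hA, hs, map_sub, map_one, sub_mulVec, one_mulVec, sub_sub_cancel]

end Krylov

namespace Polynomial.Chebyshev

lemma T_real_eval_half_add_inv (n : ℕ) {q : ℝ} (hq : 0 < q) :
    (T ℝ n).eval ((q + q⁻¹) / 2) = (q ^ n + q⁻¹ ^ n) / 2 := by
  have hcosh : (q + q⁻¹) / 2 = Real.cosh (Real.log q) := by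
    rw [Real.cosh_eq, Real.exp_neg, Real.exp_log hq]
  rw [hcosh, T_real_cosh, Real.cosh_eq, Int.cast_natCast, ← Real.log_pow, Real.exp_neg,
    Real.exp_log (pow_pos hq n), inv_pow]

lemma inv_T_real_eval_half_add_inv_le (n : ℕ) {q : ℝ} (hq : 0 < q) :
    ((T ℝ n).eval ((q + q⁻¹) / 2))⁻¹ ≤ 2 * q ^ n := by
  rw [T_real_eval_half_add_inv n hq]
  calc ((q ^ n + q⁻¹ ^ n) / 2)⁻¹ ≤ (q⁻¹ ^ n / 2)⁻¹ := by
        gcongr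
        exact le_add_of_nonneg_left (by positivity)
    _ = 2 * q ^ n := by rw [inv_div, inv_pow, div_inv_eq_mul]

end Polynomial.Chebyshev

noncomputable def chebyshevResidual (a b : ℝ) (k : ℕ) : ℝ[X] :=
  C ((Chebyshev.T ℝ k).eval ((b + a) / (b - a)))⁻¹ *
    (Chebyshev.T ℝ k).comp (C (b - a)⁻¹ * (C (b + a) - C 2 * X))

section ChebyshevResidual

variable {a b : ℝ}

lemma chebyshevResidual_eval (k : ℕ) (μ : ℝ) : (chebyshevResidual a b k).eval μ =
    ((Chebyshev.T ℝ k).eval ((b + a) / (b - a)))⁻¹ *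
      (Chebyshev.T ℝ k).eval ((b + a - 2 * μ) / (b - a)) := by
  simp [chebyshevResidual, div_eq_inv_mul]

lemma one_le_T_real_eval_add_div_sub (ha : 0 ≤ a) (hab : a < b) (k : ℕ) :
    1 ≤ (Chebyshev.T ℝ k).eval ((b + a) / (b - a)) :=
  Chebyshev.one_le_eval_T_real k ((one_le_div (by linarith)).mpr (by linarith))

lemma chebyshevResidual_eval_zero (ha : 0 ≤ a) (hab : a < b) (k : ℕ) :
    (chebyshevResidual a b k).eval 0 = 1 := by
  rw [chebyshevResidual_eval, mul_zero, sub_zero]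
  exact inv_mul_cancel₀ (zero_lt_one.trans_le (one_le_T_real_eval_add_div_sub ha hab k)).ne'

lemma natDegree_chebyshevResidual_le (a b : ℝ) (k : ℕ) :
    (chebyshevResidual a b k).natDegree ≤ k := by
  refine (natDegree_C_mul_le _ _).trans ?_
  rw [natDegree_comp, Chebyshev.natDegree_T, Int.natAbs_natCast]
  refine (Nat.mul_le_mul_left k ?_).trans_eq (mul_one k)
  exact (natDegree_C_mul_le _ _).trans (natDegree_sub_le_of_le (natDegree_C _).le
    ((natDegree_C_mul_le _ _).trans natDegree_X_le))

lemma one_lt_sqrt_div (ha : 0 < a) (hab : a < b) : 1 < Real.sqrt (b / a) :=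
  Real.lt_sqrt_of_sq_lt (by rw [one_pow, one_lt_div ha]; exact hab)

lemma add_div_sub_eq_half_add_inv (ha : 0 < a) (hab : a < b) :
    (b + a) / (b - a) = ((Real.sqrt (b / a) - 1) / (Real.sqrt (b / a) + 1) +
      ((Real.sqrt (b / a) - 1) / (Real.sqrt (b / a) + 1))⁻¹) / 2 := by
  have hs := one_lt_sqrt_div ha hab
  have hb : b = Real.sqrt (b / a) ^ 2 * a := by
    rw [Real.sq_sqrt (div_pos (ha.trans hab) ha).le, div_mul_cancel₀ _ ha.ne']
  generalize Real.sqrt (b / a) = s at hs hb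
  subst hb
  have h1 : s - 1 ≠ 0 := by linarith
  have h2 : s ^ 2 - 1 ≠ 0 := by nlinarith
  rw [← sub_one_mul, ← add_one_mul, mul_div_mul_right _ _ ha.ne']
  field_simp
  ring

lemma abs_chebyshevResidual_eval_le (ha : 0 < a) (hab : a < b) (k : ℕ) {μ : ℝ}
    (hμ : μ ∈ Set.Icc a b) :
    |(chebyshevResidual a b k).eval μ| ≤
      2 * ((Real.sqrt (b / a) - 1) / (Real.sqrt (b / a) + 1)) ^ k := by
  have hq : 0 < (Real.sqrt (b / a) - 1) / (Real.sqrt (b / a) + 1) := by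
    have := one_lt_sqrt_div ha hab
    exact div_pos (by linarith) (by linarith)
  have hσ : |(b + a - 2 * μ) / (b - a)| ≤ 1 := by
    rw [abs_div, abs_of_pos (sub_pos.mpr hab), div_le_one (sub_pos.mpr hab), abs_le]
    constructor <;> linarith [hμ.1, hμ.2]
  have hτ := zero_lt_one.trans_le (one_le_T_real_eval_add_div_sub ha.le hab k)
  rw [chebyshevResidual_eval, abs_mul, abs_inv, abs_of_pos hτ]
  calc ((Chebyshev.T ℝ k).eval ((b + a) / (b - a)))⁻¹ *
        |(Chebyshev.T ℝ k).eval ((b + a - 2 * μ) / (b - a))|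
      ≤ ((Chebyshev.T ℝ k).eval ((b + a) / (b - a)))⁻¹ :=
        mul_le_of_le_one_right (inv_pos.mpr hτ).le (Chebyshev.abs_eval_T_real_le_one _ hσ)
    _ ≤ _ := by
        rw [add_div_sub_eq_half_add_inv ha hab]
        exact Chebyshev.inv_T_real_eval_half_add_inv_le k hq

end ChebyshevResidual

lemma exists_residual_poly_abs_eval_le {a b : ℝ} (ha : 0 < a) (hab : a ≤ b) (k : ℕ) :
    ∃ p : ℝ[X], p.eval 0 = 1 ∧ p.natDegree ≤ k ∧ ∀ μ ∈ Set.Icc a b,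
      |p.eval μ| ≤ 2 * ((Real.sqrt (b / a) - 1) / (Real.sqrt (b / a) + 1)) ^ k := by
  rcases hab.lt_or_eq with hab | rfl
  · exact ⟨chebyshevResidual a b k, chebyshevResidual_eval_zero ha.le hab k,
      natDegree_chebyshevResidual_le a b k, fun μ hμ => abs_chebyshevResidual_eval_le ha hab k hμ⟩
  · refine ⟨(1 - C a⁻¹ * X) ^ k, by simp, ?_, fun μ hμ => ?_⟩
    · refine natDegree_pow_le.trans ((Nat.mul_le_mul_left k ?_).trans_eq (mul_one k))
      exact natDegree_sub_le_of_le natDegree_one.le ((natDegree_C_mul_le _ _).trans natDegree_X_le)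
    · rw [Set.Icc_self, Set.mem_singleton_iff] at hμ
      subst hμ
      rcases k with _ | k <;> simp [ha.ne']

theorem stmt_7_general {N : ℕ} (A : Matrix (Fin N) (Fin N) ℝ) (hA : A.PosDef)
    (lmin lmax : ℝ)
    (hmin : lmin ∈ spectrum ℝ A ∧ ∀ μ ∈ spectrum ℝ A, lmin ≤ μ)
    (hmax : lmax ∈ spectrum ℝ A ∧ ∀ μ ∈ spectrum ℝ A, μ ≤ lmax)
    (b x₀ x : Fin N → ℝ) (hx : x = A⁻¹ *ᵥ b)
    (r₀ : Fin N → ℝ) (hr₀ : r₀ = b - A *ᵥ x₀) (k : ℕ) :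
    sInf {t | ∃ z : Fin N → ℝ, (∃ v ∈ krylov A r₀ k, z = x₀ + v) ∧ t = Anorm A (x - z)} ≤
      2 * ((Real.sqrt (lmax / lmin) - 1) / (Real.sqrt (lmax / lmin) + 1)) ^ k *
        Anorm A (x - x₀) := by
  have hle : lmin ≤ lmax := hmin.2 lmax hmax.1
  obtain ⟨p, hp0, hpk, hpC⟩ :=
    exists_residual_poly_abs_eval_le (hA.pos_of_mem_spectrum hmin.1) hle k
  have hC := (abs_nonneg _).trans (hpC lmin ⟨le_rfl, hle⟩)
  have hr : r₀ = A *ᵥ (x - x₀) := by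
    rw [hr₀, mulVec_sub, hx, mulVec_mulVec,
      mul_nonsing_inv A ((isUnit_iff_isUnit_det A).mp hA.isUnit), one_mulVec]
  obtain ⟨v, hv, hve⟩ := exists_mem_krylov_sub_eq_aeval_mulVec A (x - x₀) hp0 hpk
  refine csInf_le_of_le (b := Anorm A (x - (x₀ + v))) ?_ ⟨x₀ + v, ⟨v, hr ▸ hv, rfl⟩, rfl⟩ ?_
  · exact ⟨0, by rintro _ ⟨z, -, rfl⟩; exact Real.sqrt_nonneg _⟩
  rw [sub_add_eq_sub_sub, hve]
  exact Anorm_aeval_mulVec_le hA.posSemidef p hC (fun μ hμ => hpC μ ⟨hmin.2 μ hμ, hmax.2 μ hμ⟩) _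

theorem stmt_7 {N : ℕ} (A : Matrix (Fin N) (Fin N) ℝ) (hA : A.PosDef)
    (lmin lmax : ℝ)
    (hmin : lmin ∈ spectrum ℝ A ∧ ∀ μ ∈ spectrum ℝ A, lmin ≤ μ)
    (hmax : lmax ∈ spectrum ℝ A ∧ ∀ μ ∈ spectrum ℝ A, μ ≤ lmax)
    (b x₀ x : Fin N → ℝ) (hx : x = A⁻¹ *ᵥ b) (hx₀ : x₀ ≠ x)
    (r₀ : Fin N → ℝ) (hr₀ : r₀ = b - A *ᵥ x₀) (k : ℕ) :
    sInf {t | ∃ z : Fin N → ℝ, (∃ v ∈ krylov A r₀ k, z = x₀ + v) ∧ t = Anorm A (x - z)} ≤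
      2 * ((Real.sqrt (lmax / lmin) - 1) / (Real.sqrt (lmax / lmin) + 1)) ^ k *
        Anorm A (x - x₀) :=
  stmt_7_general A hA lmin lmax hmin hmax b x₀ x hx r₀ hr₀ k
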